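/- arXiv:1211.2447 — 5 statements merged into one kernel-verified Lean document; each statement's English description precedes it below -/
import Mathlib

section
/- For every prime p, the sum over nonnegative integers i, j and over l with 0 ≤ l ≤ v + i + j (where v is a fixed nonnegative integer) of p^{-is} p^{-j(s-1)} p^{-l(s-2)} equals ζ_p(s-2)·(ζ_p(s)ζ_p(s-1) − p^{(2−s)(v+1)} ζ_p(2s−2) ζ_p(2s−3)), where ζ_p(s) = 1/(1−p^{−s}). (Interpret as an identity of formal/convergent series for real s > 3.) -/
noncomputable def zetap (p : ℕ) (s : ℝ) : ℝ := (1 - (p : ℝ) ^ (-s))⁻¹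

theorem stmt_0 (p : ℕ) (hp : p.Prime) (v : ℕ) (s : ℝ) (hs : 3 < s) :
    (∑' i : ℕ, ∑' j : ℕ, ∑ l ∈ Finset.range (v + i + j + 1),
      (p : ℝ) ^ (-(i : ℝ) * s) * (p : ℝ) ^ (-(j : ℝ) * (s - 1)) *
        (p : ℝ) ^ (-(l : ℝ) * (s - 2))) =
    zetap p (s - 2) * (zetap p s * zetap p (s - 1) -
      (p : ℝ) ^ ((2 - s) * ((v : ℝ) + 1)) * zetap p (2 * s - 2) * zetap p (2 * s - 3)) := by
  have hP : (1:ℝ) < (p:ℝ) := by exact_mod_cast hp.one_lt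
  have hP0 : (0:ℝ) < (p:ℝ) := by linarith
  set P : ℝ := (p:ℝ) with hPdef
  have key : ∀ t : ℝ, 0 < t → P ^ (-t) < 1 := fun t ht =>
    Real.rpow_lt_one_of_one_lt_of_neg hP (by linarith)
  have pos : ∀ t : ℝ, 0 < P ^ (-t) := fun t => Real.rpow_pos_of_pos hP0 _
  set x := P ^ (-s) with hxdef
  set y := P ^ (-(s-1)) with hydef
  set z := P ^ (-(s-2)) with hzdef
  have hx1 : x < 1 := key s (by linarith)
  have hy1 : y < 1 := key (s-1) (by linarith)
  have hz1 : z < 1 := key (s-2) (by linarith)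
  have hx0 : 0 < x := pos s
  have hy0 : 0 < y := pos (s-1)
  have hz0 : 0 < z := pos (s-2)
  have hxz : x * z = P ^ (-(2*s-2)) := by
    rw [hxdef, hzdef, ← Real.rpow_add hP0]; congr 1; ring
  have hyz : y * z = P ^ (-(2*s-3)) := by
    rw [hydef, hzdef, ← Real.rpow_add hP0]; congr 1; ring
  have hxz1 : x * z < 1 := by rw [hxz]; exact key (2*s-2) (by linarith)
  have hyz1 : y * z < 1 := by rw [hyz]; exact key (2*s-3) (by linarith)
  have hxz0 : 0 < x * z := mul_pos hx0 hz0
  have hyz0 : 0 < y * z := mul_pos hy0 hz0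
  have hxpow : ∀ i : ℕ, P ^ (-(i:ℝ)*s) = x ^ i := by
    intro i
    rw [hxdef, ← Real.rpow_natCast (P ^ (-s)) i, ← Real.rpow_mul hP0.le]
    congr 1; ring
  have hypow : ∀ j : ℕ, P ^ (-(j:ℝ)*(s-1)) = y ^ j := by
    intro j
    rw [hydef, ← Real.rpow_natCast (P ^ (-(s-1))) j, ← Real.rpow_mul hP0.le]
    congr 1; ring
  have hzpow : ∀ l : ℕ, P ^ (-(l:ℝ)*(s-2)) = z ^ l := by
    intro l
    rw [hzdef, ← Real.rpow_natCast (P ^ (-(s-2))) l, ← Real.rpow_mul hP0.le]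
    congr 1; ring
  have hz1' : z - 1 ≠ 0 := by linarith
  have h1z : (1:ℝ) - z ≠ 0 := by linarith
  have Sy : Summable (fun j : ℕ => y ^ j) := summable_geometric_of_lt_one hy0.le hy1
  have Syz : Summable (fun j : ℕ => (y*z) ^ j) := summable_geometric_of_lt_one hyz0.le hyz1
  have Sx : Summable (fun i : ℕ => x ^ i) := summable_geometric_of_lt_one hx0.le hx1
  have Sxz : Summable (fun i : ℕ => (x*z) ^ i) := summable_geometric_of_lt_one hxz0.le hxz1
  have step1 : (∑' i : ℕ, ∑' j : ℕ, ∑ l ∈ Finset.range (v + i + j + 1),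
      P ^ (-(i : ℝ) * s) * P ^ (-(j : ℝ) * (s - 1)) * P ^ (-(l : ℝ) * (s - 2))) =
      ∑' i : ℕ, ∑' j : ℕ,
        (((1-z)⁻¹ * x ^ i) * y ^ j - (((1-z)⁻¹ * z ^ (v+1) * (x*z) ^ i)) * (y*z) ^ j) := by
    refine tsum_congr fun i => tsum_congr fun j => ?_
    have : ∀ l ∈ Finset.range (v + i + j + 1),
        P ^ (-(i : ℝ) * s) * P ^ (-(j : ℝ) * (s - 1)) * P ^ (-(l : ℝ) * (s - 2))
        = x ^ i * y ^ j * z ^ l := by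
      intro l _; rw [hxpow i, hypow j, hzpow l]
    rw [Finset.sum_congr rfl this, ← Finset.mul_sum, geom_sum_eq (by linarith : z ≠ 1)]
    field_simp [h1z]
    rw [show v + i + j + 1 = (v+1) + i + j by ring]
    simp only [pow_add, mul_pow]
    ring
  rw [step1]
  have step2 : ∀ i : ℕ, (∑' j : ℕ,
      (((1-z)⁻¹ * x ^ i) * y ^ j - (((1-z)⁻¹ * z ^ (v+1) * (x*z) ^ i)) * (y*z) ^ j)) =
      ((1-z)⁻¹ * (1-y)⁻¹) * x ^ i - ((1-z)⁻¹ * z ^ (v+1) * (1-y*z)⁻¹) * (x*z) ^ i := by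
    intro i
    rw [Summable.tsum_sub (Sy.mul_left _) (Syz.mul_left _), tsum_mul_left, tsum_mul_left,
      tsum_geometric_of_lt_one hy0.le hy1, tsum_geometric_of_lt_one hyz0.le hyz1]
    ring
  rw [tsum_congr step2, Summable.tsum_sub (Sx.mul_left _) (Sxz.mul_left _),
    tsum_mul_left, tsum_mul_left, tsum_geometric_of_lt_one hx0.le hx1,
    tsum_geometric_of_lt_one hxz0.le hxz1]
  have hzv : P ^ ((2 - s) * ((v : ℝ) + 1)) = z ^ (v+1) := by
    rw [hzdef, ← Real.rpow_natCast (P ^ (-(s-2))) (v+1), ← Real.rpow_mul hP0.le]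
    congr 1; push_cast; ring
  show _ = zetap p (s-2) * (zetap p s * zetap p (s-1) -
      P ^ ((2 - s) * ((v : ℝ) + 1)) * zetap p (2*s-2) * zetap p (2*s-3))
  rw [hzv]
  simp only [zetap, ← hPdef, ← hxdef, ← hydef, ← hzdef, ← hxz, ← hyz]
  ring
end

section
/- For real s > 2 and prime p, (1 − p^{−1})^{−2} ∫_{(t₂₂,t₃₃) ∈ Z_p², t₂₂ ∣ t₃₃} |t₂₂|^{s−2}|t₃₃|^{s−2} dμ = ζ_p(s−1) ζ_p(2s−2). -/
/-!
Split the domain according to the valuations `m ≤ m + k` of `t₂₂` and `t₃₃` (on `t₃₃ = 0` the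
integrand vanishes). Since `p^n ℤ_p` is an additive subgroup of index `p^n`, the shell
`|x| = p^{-n}` has Haar measure `p^{-n} (1 - p⁻¹)`, so the piece indexed by `(m, k)` contributes
`(1 - p⁻¹)² X^{2m} X^k` with `X = p^{-(s-1)}`; the two geometric series sum to
`ζ_p(2s-2) ζ_p(s-1)`.
-/

open MeasureTheory TopologicalSpace

noncomputable instance (p : ℕ) [Fact p.Prime] : MeasurableSpace ℤ_[p] := borel _
instance (p : ℕ) [Fact p.Prime] : BorelSpace ℤ_[p] := ⟨rfl⟩

/-- `ℤ_p` as a positive compact subset of itself. -/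
noncomputable def univPC (p : ℕ) [Fact p.Prime] : PositiveCompacts ℤ_[p] :=
  ⟨⟨Set.univ, isCompact_univ⟩, by simp⟩

/-- The Haar measure on `ℤ_p`, normalized so that `μ (ℤ_p) = 1`. -/
noncomputable def μ (p : ℕ) [Fact p.Prime] : Measure ℤ_[p] :=
  Measure.addHaarMeasure (univPC p)

open scoped ENNReal

theorem tsum_prod_geometric_of_abs_lt_one {x y : ℝ} (hx : |x| < 1) (hy : |y| < 1) :
    ∑' mk : ℕ × ℕ, x ^ mk.1 * y ^ mk.2 = (1 - x)⁻¹ * (1 - y)⁻¹ := by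
  rw [← tsum_mul_tsum_of_summable_norm (summable_norm_geometric_of_norm_lt_one hx)
    (summable_norm_geometric_of_norm_lt_one hy), tsum_geometric_of_abs_lt_one hx,
    tsum_geometric_of_abs_lt_one hy]

namespace PadicInt

variable {p : ℕ} [Fact p.Prime]

theorem dvd_iff_norm_le {x y : ℤ_[p]} : x ∣ y ↔ ‖y‖ ≤ ‖x‖ := by
  refine ⟨fun ⟨c, hc⟩ ↦ ?_, fun h ↦ ?_⟩
  · rw [hc, norm_mul]
    exact mul_le_of_le_one_right (norm_nonneg x) c.norm_le_one
  · rcases eq_or_ne x 0 with rfl | hx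
    · simp_all
    have hx' : (x : ℚ_[p]) ≠ 0 := by simpa using hx
    refine ⟨⟨y / x, ?_⟩, Subtype.ext (mul_div_cancel₀ (y : ℚ_[p]) hx').symm⟩
    rw [norm_div]
    exact div_le_one_of_le₀ h (norm_nonneg _)

theorem index_span_p_pow (n : ℕ) :
    (Ideal.span {(p : ℤ_[p]) ^ n}).toAddSubgroup.index = p ^ n := by
  rw [← ker_toZModPow]
  have := AddSubgroup.index_ker (toZModPow (p := p) n).toAddMonoidHom
  rw [AddMonoidHom.range_eq_top_of_surjective _ (ZMod.ringHom_surjective _)] at this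
  exact this.trans (by simp)

theorem coe_span_p_pow (n : ℕ) :
    (Ideal.span {(p : ℤ_[p]) ^ n} : Set ℤ_[p]) = {x | ‖x‖ ≤ (p : ℝ) ^ (-n : ℤ)} := by
  ext x
  exact (norm_le_pow_iff_mem_span_pow x n).symm

theorem measurableSet_span_p_pow (n : ℕ) :
    MeasurableSet (Ideal.span {(p : ℤ_[p]) ^ n} : Set ℤ_[p]) := by
  rw [coe_span_p_pow]
  exact measurableSet_le continuous_norm.measurable measurable_const

theorem measure_span_p_pow (μ : Measure ℤ_[p]) [μ.IsAddLeftInvariant] (n : ℕ) :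
    μ (Ideal.span {(p : ℤ_[p]) ^ n}) = (p : ℝ≥0∞)⁻¹ ^ n * μ Set.univ := by
  have hindex := index_span_p_pow (p := p) n
  have : (Ideal.span {(p : ℤ_[p]) ^ n}).toAddSubgroup.FiniteIndex :=
    ⟨by rw [hindex]; exact pow_ne_zero _ (Fact.out : p.Prime).ne_zero⟩
  have hp : (p : ℝ≥0∞) ≠ 0 := by simp [(Fact.out : p.Prime).ne_zero]
  rw [← AddSubgroup.index_mul_measure (Ideal.span {(p : ℤ_[p]) ^ n}).toAddSubgroup
    (measurableSet_span_p_pow n) μ, hindex, ← mul_assoc,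
    Nat.cast_pow, ← mul_pow, ENNReal.inv_mul_cancel hp (by simp), one_pow, one_mul]
  rfl

def normShell (p : ℕ) [Fact p.Prime] (n : ℕ) : Set ℤ_[p] := {x | ‖x‖ = (p : ℝ) ^ (-n : ℤ)}

theorem measurableSet_normShell (n : ℕ) : MeasurableSet (normShell p n) :=
  continuous_norm.measurable (measurableSet_singleton _)

theorem normShell_eq_sdiff (n : ℕ) :
    normShell p n =
      (Ideal.span {(p : ℤ_[p]) ^ n} : Set ℤ_[p]) \ Ideal.span {(p : ℤ_[p]) ^ (n + 1)} := by
  ext x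
  simp only [normShell, coe_span_p_pow, Set.mem_sdiff, Set.mem_ofPred_eq, Nat.cast_add,
    Nat.cast_one, neg_add, ← sub_eq_add_neg, sub_add_cancel, not_lt,
    norm_le_pow_iff_norm_lt_pow_add_one x (-(n : ℤ) - 1)]
  exact ⟨fun h ↦ ⟨h.le, h.ge⟩, fun h ↦ le_antisymm h.1 h.2⟩

theorem measureReal_normShell (μ : Measure ℤ_[p]) [μ.IsAddLeftInvariant] [IsProbabilityMeasure μ]
    (n : ℕ) : μ.real (normShell p n) = (p : ℝ)⁻¹ ^ n * (1 - (p : ℝ)⁻¹) := by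
  have hball (k : ℕ) : μ.real (Ideal.span {(p : ℤ_[p]) ^ k}) = (p : ℝ)⁻¹ ^ k := by
    simp [measureReal_def, measure_span_p_pow]
  rw [normShell_eq_sdiff, measureReal_sdiff _ (measurableSet_span_p_pow _), hball, hball]
  · ring
  · rw [pow_succ]
    exact Ideal.span_singleton_le_span_singleton.mpr (dvd_mul_right _ _)

theorem normShell_disjoint {m n : ℕ} (h : m ≠ n) : Disjoint (normShell p m) (normShell p n) := by
  refine Set.disjoint_left.mpr fun x hm hn ↦ h ?_
  have hp : (1 : ℝ) < p := mod_cast (Fact.out : p.Prime).one_lt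
  have := zpow_right_injective₀ (by positivity : (0 : ℝ) < p) hp.ne' (hm.symm.trans hn)
  omega

theorem mem_normShell_valuation {x : ℤ_[p]} (hx : x ≠ 0) : x ∈ normShell p x.valuation :=
  norm_eq_zpow_neg_valuation hx

theorem norm_rpow_of_mem_normShell {n : ℕ} {x : ℤ_[p]} (hx : x ∈ normShell p n) (a : ℝ) :
    ‖x‖ ^ a = ((p : ℝ) ^ (-a)) ^ n := by
  rw [hx, ← Real.rpow_intCast, ← Real.rpow_natCast, ← Real.rpow_mul (by positivity),
    ← Real.rpow_mul (by positivity)]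
  push_cast
  ring_nf

theorem iUnion_normShell_prod :
    ⋃ mk : ℕ × ℕ, normShell p mk.1 ×ˢ normShell p (mk.1 + mk.2) = {q | q.1 ∣ q.2 ∧ q.2 ≠ 0} := by
  have hp : (1 : ℝ) ≤ p := mod_cast (Fact.out : p.Prime).one_lt.le
  ext ⟨x, y⟩
  simp only [Set.mem_iUnion, Set.mem_prod, Set.mem_ofPred_eq, dvd_iff_norm_le]
  constructor
  · rintro ⟨⟨m, k⟩, hx, hy⟩
    refine ⟨hx ▸ hy ▸ zpow_le_zpow_right₀ hp (by omega), fun h ↦ ?_⟩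
    simp only [normShell, h, norm_zero, Set.mem_ofPred_eq] at hy
    exact (zpow_pos (by positivity) _).ne hy
  · rintro ⟨hle, hy⟩
    have hx : x ≠ 0 := by rintro rfl; simp_all
    have hval : x.valuation ≤ y.valuation := by
      rwa [mem_normShell_valuation hx, norm_le_pow_iff_le_valuation y hy] at hle
    refine ⟨⟨x.valuation, y.valuation - x.valuation⟩, mem_normShell_valuation hx, ?_⟩
    rw [Nat.add_sub_cancel' hval]
    exact mem_normShell_valuation hy

theorem setIntegral_dvd_eq_tsum {ν : Measure (ℤ_[p] × ℤ_[p])} [IsFiniteMeasure ν]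
    {f : ℤ_[p] × ℤ_[p] → ℝ} (hf : Continuous f) (hf0 : ∀ x, f (x, 0) = 0) :
    ∫ q in {q : ℤ_[p] × ℤ_[p] | q.1 ∣ q.2}, f q ∂ν =
      ∑' mk : ℕ × ℕ, ∫ q in normShell p mk.1 ×ˢ normShell p (mk.1 + mk.2), f q ∂ν := by
  have hdvd : MeasurableSet {q : ℤ_[p] × ℤ_[p] | q.1 ∣ q.2} := by
    simp_rw [dvd_iff_norm_le]
    exact measurableSet_le (by fun_prop) (by fun_prop)
  rw [setIntegral_eq_of_subset_of_forall_sdiff_eq_zero hdvd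
    (s := ⋃ mk : ℕ × ℕ, normShell p mk.1 ×ˢ normShell p (mk.1 + mk.2)) ?sub ?vanish,
    integral_iUnion (fun mk ↦ (measurableSet_normShell _).prod (measurableSet_normShell _)) ?disj
    (hf.integrable_of_hasCompactSupport (.of_compactSpace _)).integrableOn]
  case sub => exact iUnion_normShell_prod (p := p) ▸ fun q hq ↦ hq.1
  case vanish =>
    rintro ⟨x, y⟩ ⟨hq, hq'⟩
    rw [iUnion_normShell_prod] at hq'
    obtain rfl : y = 0 := by_contra fun h ↦ hq' ⟨hq, h⟩
    exact hf0 x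
  case disj =>
    rintro ⟨m, k⟩ ⟨m', k'⟩ hne
    refine Set.disjoint_prod.mpr ?_
    by_cases hm : m = m'
    · exact .inr (normShell_disjoint (by grind))
    · exact .inl (normShell_disjoint hm)

variable (μ : Measure ℤ_[p]) [μ.IsAddLeftInvariant] [IsProbabilityMeasure μ]

theorem setIntegral_normShell_prod (a : ℝ) (m n : ℕ) :
    ∫ q in normShell p m ×ˢ normShell p n, ‖q.1‖ ^ a * ‖q.2‖ ^ a ∂μ.prod μ =
      (1 - (p : ℝ)⁻¹) ^ 2 * ((p : ℝ) ^ (-(a + 1))) ^ m * ((p : ℝ) ^ (-(a + 1))) ^ n := by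
  rw [setIntegral_congr_fun ((measurableSet_normShell m).prod (measurableSet_normShell n))
    (g := fun _ ↦ ((p : ℝ) ^ (-a)) ^ m * ((p : ℝ) ^ (-a)) ^ n)
    fun q hq ↦ by rw [norm_rpow_of_mem_normShell hq.1, norm_rpow_of_mem_normShell hq.2],
    setIntegral_const, measureReal_prod_prod, measureReal_normShell, measureReal_normShell,
    smul_eq_mul]
  have hp : (0 : ℝ) < p := mod_cast (Fact.out : p.Prime).pos
  rw [neg_add, Real.rpow_add hp, Real.rpow_neg_one]
  ring

theorem setIntegral_dvd_norm_rpow_mul_norm_rpow {a : ℝ} (ha : 0 < a) :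
    ∫ q in {q : ℤ_[p] × ℤ_[p] | q.1 ∣ q.2}, ‖q.1‖ ^ a * ‖q.2‖ ^ a ∂μ.prod μ =
      (1 - (p : ℝ)⁻¹) ^ 2 * (zetap p (a + 1) * zetap p (2 * a + 2)) := by
  rw [setIntegral_dvd_eq_tsum (by fun_prop (disch := exact ha.le))
    fun x ↦ by simp [Real.zero_rpow ha.ne']]
  simp_rw [setIntegral_normShell_prod]
  have hp : (1 : ℝ) < p := mod_cast (Fact.out : p.Prime).one_lt
  set X : ℝ := (p : ℝ) ^ (-(a + 1))
  have hX : |X| < 1 := by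
    rw [abs_of_nonneg (by positivity)]
    exact Real.rpow_lt_one_of_one_lt_of_neg hp (by linarith)
  have hX2 : X ^ 2 = (p : ℝ) ^ (-(2 * a + 2)) := by
    rw [← Real.rpow_natCast, ← Real.rpow_mul (by positivity)]
    ring_nf
  have hterm (mk : ℕ × ℕ) : (1 - (p : ℝ)⁻¹) ^ 2 * X ^ mk.1 * X ^ (mk.1 + mk.2) =
      (1 - (p : ℝ)⁻¹) ^ 2 * ((X ^ 2) ^ mk.1 * X ^ mk.2) := by
    ring
  rw [tsum_congr hterm, tsum_mul_left, tsum_prod_geometric_of_abs_lt_one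
    (by rw [abs_pow]; exact pow_lt_one₀ (abs_nonneg X) hX two_ne_zero) hX,
    hX2, zetap, zetap, mul_comm (_⁻¹)]

end PadicInt

instance (p : ℕ) [Fact p.Prime] : (μ p).IsAddHaarMeasure :=
  Measure.isAddHaarMeasure_addHaarMeasure _

instance (p : ℕ) [Fact p.Prime] : IsProbabilityMeasure (μ p) :=
  ⟨Measure.addHaarMeasure_self (K₀ := univPC p)⟩

theorem stmt_13 (p : ℕ) [Fact p.Prime] (s : ℝ) (hs : 2 < s) :
    ((1 - (p : ℝ)⁻¹)⁻¹) ^ 2 *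
      ∫ t in {q : ℤ_[p] × ℤ_[p] | q.1 ∣ q.2},
        ‖t.1‖ ^ (s - 2) * ‖t.2‖ ^ (s - 2) ∂((μ p).prod (μ p)) =
    zetap p (s - 1) * zetap p (2 * s - 2) := by
  have hp : 1 - (p : ℝ)⁻¹ ≠ 0 := by
    have : (p : ℝ)⁻¹ < 1 := inv_lt_one_of_one_lt₀ (mod_cast (Fact.out : p.Prime).one_lt)
    linarith
  rw [PadicInt.setIntegral_dvd_norm_rpow_mul_norm_rpow (μ p) (by linarith : 0 < s - 2),
    ← mul_assoc, ← mul_pow, inv_mul_cancel₀ hp, one_pow, one_mul]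
  congr 2 <;> ring
end

section
/- For real s > 3, a prime p, and a nonnegative integer v, (1 − p^{−1})^{−2} ∫_{(t₁₁,t₂₂) ∈ Z_p², |t₁₁| = |t₂₂|} |t₁₁|^{s−2} |t₂₂|^{s−2} dμ = ζ_p(2s−2), and (1 − p^{−1})^{−2} ∫_{|t₁₁| = p|t₂₂|} |t₁₁|^{s−2}|t₂₂|^{s−2} dμ = p^{1−s} ζ_p(2s−2). -/
open MeasureTheory TopologicalSpace

/-! The ball `|x| ≤ p^{-n}` is the kernel of `ℤ_p → ℤ/p^n`, an additive subgroup of index `p^n`,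
so its Haar measure is `p^{-n}` and the sphere `|x| = p^{-n}` has measure `p^{-n}(1 - p^{-1})`.
Off the null point `(0, 0)`, the set `|t₁| = p^k |t₂|` is the disjoint union over `n` of the
products of the spheres of radii `p^{-n}` and `p^{-n-k}`, on which the integrand `|t₁|^r |t₂|^r`
is constant. Writing `c = p^{-(r+1)}`, the piece indexed by `n` contributes
`(1 - p^{-1})² c^k (c²)^n`, and the geometric series sums to `(1 - p^{-1})² c^k / (1 - c²)`;
for `r = s - 2` this is `(1 - p^{-1})² p^{(1-s)k} ζ_p(2s - 2)`. -/

open Metric Filter Topology Set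

theorem pow_rpow_mul_pow {a : ℝ} (ha : 0 < a) (r : ℝ) (m : ℕ) :
    (a ^ m) ^ r * a ^ m = (a ^ (r + 1)) ^ m := by
  rw [← Real.rpow_pow_comm ha.le, Real.rpow_add_one ha.ne', mul_pow]

namespace PadicInt

variable {p : ℕ} [Fact p.Prime]

theorem one_lt_cast_p : (1 : ℝ) < p :=
  Nat.one_lt_cast.mpr (Fact.out : p.Prime).one_lt

theorem norm_p_lt_one : ‖(p : ℤ_[p])‖ < 1 :=
  norm_p (p := p) ▸ inv_lt_one_of_one_lt₀ one_lt_cast_p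

-- `ℤ_p` is not discrete, so its Haar measure has no atoms.
instance : (𝓝[≠] (0 : ℤ_[p])).NeBot :=
  mem_closure_iff_nhdsWithin_neBot.mp <| mem_closure_of_tendsto
    (tendsto_pow_atTop_nhds_zero_of_norm_lt_one norm_p_lt_one)
    (Eventually.of_forall fun n => pow_ne_zero n (Nat.cast_ne_zero.mpr (Fact.out : p.Prime).ne_zero))

theorem closedBall_zero_eq_ker_toZModPow (n : ℕ) :
    closedBall (0 : ℤ_[p]) ((p : ℝ) ^ (-(n : ℤ))) =
      ((toZModPow n : ℤ_[p] →+* ZMod (p ^ n)).toAddMonoidHom.ker : Set ℤ_[p]) := by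
  ext x
  rw [mem_closedBall_zero_iff, norm_le_pow_iff_mem_span_pow, ← ker_toZModPow]
  rfl

theorem index_ker_toZModPow (n : ℕ) :
    (toZModPow n : ℤ_[p] →+* ZMod (p ^ n)).toAddMonoidHom.ker.index = p ^ n := by
  rw [AddSubgroup.index_ker, AddMonoidHom.range_eq_top_of_surjective _ (ZMod.ringHom_surjective _),
    AddSubgroup.card_top, Nat.card_zmod]

theorem ball_zero_zpow_eq_closedBall (n : ℤ) :
    ball (0 : ℤ_[p]) ((p : ℝ) ^ n) = closedBall 0 ((p : ℝ) ^ (n - 1)) := by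
  ext x
  rw [mem_ball_zero_iff, mem_closedBall_zero_iff, norm_le_pow_iff_norm_lt_pow_add_one,
    sub_add_cancel]

theorem norm_eq_zpow_neg_iff (x : ℤ_[p]) (n : ℕ) :
    ‖x‖ = (p : ℝ) ^ (-(n : ℤ)) ↔ x ≠ 0 ∧ x.valuation = n := by
  by_cases hx : x = 0
  · simp only [hx, norm_zero, ne_eq, not_true_eq_false, false_and, iff_false]
    exact (zpow_pos (zero_lt_one.trans one_lt_cast_p) _).ne
  · rw [norm_eq_zpow_neg_valuation hx, (zpow_right_strictMono₀ one_lt_cast_p).injective.eq_iff]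
    simp [hx]

theorem setOf_norm_eq_pow_mul_norm (k : ℕ) :
    {q : ℤ_[p] × ℤ_[p] | ‖q.1‖ = (p : ℝ) ^ k * ‖q.2‖} =
      insert (0, 0) (⋃ n : ℕ,
        sphere 0 ((p : ℝ) ^ (-(n : ℤ))) ×ˢ sphere 0 ((p : ℝ) ^ (-((n + k : ℕ) : ℤ)))) := by
  have hp : (p : ℝ) ≠ 0 := (zero_lt_one.trans one_lt_cast_p).ne'
  ext ⟨x, y⟩
  simp only [mem_ofPred_eq, mem_insert_iff, mem_iUnion, mem_prod, mem_sphere_zero_iff_norm,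
    norm_eq_zpow_neg_iff, Prod.mk.injEq]
  by_cases hy : y = 0
  · simp [hy]
  by_cases hx : x = 0
  · simp [hx, hy, hp]
  rw [norm_eq_zpow_neg_valuation hx, norm_eq_zpow_neg_valuation hy, ← zpow_natCast,
    ← zpow_add₀ hp, (zpow_right_strictMono₀ one_lt_cast_p).injective.eq_iff]
  simp only [hx, hy, false_and, false_or, ne_eq, not_false_eq_true, true_and]
  exact ⟨fun h => ⟨x.valuation, rfl, by omega⟩, by rintro ⟨n, rfl, h⟩; omega⟩

instance : (μ p).IsAddHaarMeasure := Measure.isAddHaarMeasure_addHaarMeasure _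

instance : IsProbabilityMeasure (μ p) := ⟨Measure.addHaarMeasure_self⟩

theorem μ_real_closedBall_zero (n : ℕ) :
    (μ p).real (closedBall 0 ((p : ℝ) ^ (-(n : ℤ)))) = (p : ℝ)⁻¹ ^ n := by
  have h := AddSubgroup.index_mul_measure (toZModPow n : ℤ_[p] →+* ZMod (p ^ n)).toAddMonoidHom.ker
    (by rw [← closedBall_zero_eq_ker_toZModPow]; exact isClosed_closedBall.measurableSet) (μ p)
  rw [index_ker_toZModPow, ← closedBall_zero_eq_ker_toZModPow, measure_univ, mul_comm] at h
  rw [measureReal_def, ENNReal.eq_inv_of_mul_eq_one_left h]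
  simp

theorem μ_real_sphere_zero (n : ℕ) :
    (μ p).real (sphere 0 ((p : ℝ) ^ (-(n : ℤ)))) = (p : ℝ)⁻¹ ^ n * (1 - (p : ℝ)⁻¹) := by
  rw [← closedBall_sdiff_ball, measureReal_sdiff ball_subset_closedBall measurableSet_ball,
    ball_zero_zpow_eq_closedBall, show -(n : ℤ) - 1 = -((n + 1 : ℕ) : ℤ) by push_cast; ring,
    μ_real_closedBall_zero, μ_real_closedBall_zero]
  ring

theorem norm_rpow_of_norm_eq_zpow {x : ℤ_[p]} {n : ℕ} (hx : ‖x‖ = (p : ℝ) ^ (-(n : ℤ)))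
    (r : ℝ) : ‖x‖ ^ r = ((p : ℝ)⁻¹ ^ n) ^ r := by
  rw [hx, zpow_neg, zpow_natCast, inv_pow]

variable (p)

theorem setIntegral_sphere_prod_sphere (r : ℝ) (m n : ℕ) :
    ∫ t in sphere 0 ((p : ℝ) ^ (-(m : ℤ))) ×ˢ sphere 0 ((p : ℝ) ^ (-(n : ℤ))),
        ‖t.1‖ ^ r * ‖t.2‖ ^ r ∂(μ p).prod (μ p) =
      (1 - (p : ℝ)⁻¹) ^ 2 * ((p : ℝ)⁻¹ ^ (r + 1)) ^ m * ((p : ℝ)⁻¹ ^ (r + 1)) ^ n := by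
  have hp : 0 < (p : ℝ)⁻¹ := inv_pos.mpr (zero_lt_one.trans one_lt_cast_p)
  rw [setIntegral_congr_fun (isClosed_sphere.measurableSet.prod isClosed_sphere.measurableSet)
      (g := fun _ => ((p : ℝ)⁻¹ ^ m) ^ r * ((p : ℝ)⁻¹ ^ n) ^ r) fun t ht => by
        rw [norm_rpow_of_norm_eq_zpow (mem_sphere_zero_iff_norm.mp ht.1),
          norm_rpow_of_norm_eq_zpow (mem_sphere_zero_iff_norm.mp ht.2)],
    setIntegral_const, measureReal_prod_prod, μ_real_sphere_zero, μ_real_sphere_zero, smul_eq_mul,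
    ← pow_rpow_mul_pow hp, ← pow_rpow_mul_pow hp]
  ring

theorem integrable_norm_rpow_mul_norm_rpow {r : ℝ} (hr : 0 ≤ r) :
    Integrable (fun t : ℤ_[p] × ℤ_[p] => ‖t.1‖ ^ r * ‖t.2‖ ^ r) ((μ p).prod (μ p)) :=
  (((continuous_fst.norm).rpow_const fun _ => Or.inr hr).mul
    ((continuous_snd.norm).rpow_const fun _ => Or.inr hr)).integrable_of_hasCompactSupport
    (HasCompactSupport.of_compactSpace _)

theorem setIntegral_norm_eq_pow_mul_norm (k : ℕ) {r : ℝ} (hr : 0 ≤ r) :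
    (1 - (p : ℝ)⁻¹)⁻¹ ^ 2 * ∫ t in {q : ℤ_[p] × ℤ_[p] | ‖q.1‖ = (p : ℝ) ^ k * ‖q.2‖},
        ‖t.1‖ ^ r * ‖t.2‖ ^ r ∂(μ p).prod (μ p) =
      ((p : ℝ)⁻¹ ^ (r + 1)) ^ k * (1 - ((p : ℝ)⁻¹ ^ (r + 1)) ^ 2)⁻¹ := by
  have hp : (p : ℝ)⁻¹ < 1 := inv_lt_one_of_one_lt₀ one_lt_cast_p
  set c := (p : ℝ)⁻¹ ^ (r + 1)
  have hc : c < 1 := Real.rpow_lt_one (by positivity) hp (by linarith)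
  have hsphere (n : ℕ) : MeasurableSet (sphere (0 : ℤ_[p]) ((p : ℝ) ^ (-(n : ℤ)))) :=
    isClosed_sphere.measurableSet
  have hdisj : Pairwise (Function.onFun Disjoint fun n : ℕ =>
      sphere (0 : ℤ_[p]) ((p : ℝ) ^ (-(n : ℤ))) ×ˢ
        sphere (0 : ℤ_[p]) ((p : ℝ) ^ (-((n + k : ℕ) : ℤ)))) :=
    fun m n hmn => disjoint_prod.mpr <| Or.inl <| disjoint_left.mpr fun x hm hn => hmn <| by
      rw [mem_sphere_zero_iff_norm, norm_eq_zpow_neg_iff] at hm hn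
      exact hm.2.symm.trans hn.2
  rw [inv_pow, inv_mul_eq_iff_eq_mul₀ (pow_ne_zero 2 (sub_pos.mpr hp).ne'),
    setOf_norm_eq_pow_mul_norm, setIntegral_congr_set (insert_ae_eq_self _ _),
    integral_iUnion (fun n => (hsphere n).prod (hsphere _)) hdisj
      (integrable_norm_rpow_mul_norm_rpow p hr).integrableOn]
  simp only [setIntegral_sphere_prod_sphere, pow_add]
  rw [← tsum_geometric_of_lt_one (by positivity) (pow_lt_one₀ (by positivity) hc two_ne_zero),
    ← tsum_mul_left, ← tsum_mul_left]
  congr 1 with n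
  ring

end PadicInt

theorem stmt_16_general (p : ℕ) [Fact p.Prime] (s : ℝ) (hs : 3 < s) :
    ((1 - (p : ℝ)⁻¹)⁻¹) ^ 2 *
        ∫ t in {q : ℤ_[p] × ℤ_[p] | ‖q.1‖ = ‖q.2‖},
          ‖t.1‖ ^ (s - 2) * ‖t.2‖ ^ (s - 2) ∂((μ p).prod (μ p)) =
      zetap p (2 * s - 2) ∧
    ((1 - (p : ℝ)⁻¹)⁻¹) ^ 2 *
        ∫ t in {q : ℤ_[p] × ℤ_[p] | ‖q.1‖ = p * ‖q.2‖},
          ‖t.1‖ ^ (s - 2) * ‖t.2‖ ^ (s - 2) ∂((μ p).prod (μ p)) =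
      (p : ℝ) ^ (1 - s) * zetap p (2 * s - 2) := by
  have hc : (p : ℝ)⁻¹ ^ (s - 2 + 1) = (p : ℝ) ^ (1 - s) := by
    rw [Real.inv_rpow (by positivity), ← Real.rpow_neg (by positivity)]
    ring_nf
  have hzeta : zetap p (2 * s - 2) = (1 - ((p : ℝ) ^ (1 - s)) ^ 2)⁻¹ := by
    rw [zetap, ← Real.rpow_natCast, ← Real.rpow_mul (by positivity)]
    ring_nf
  have key (k : ℕ) := PadicInt.setIntegral_norm_eq_pow_mul_norm p k (r := s - 2) (by linarith)
  have key₀ := key 0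
  have key₁ := key 1
  simp only [hc, pow_zero, pow_one, one_mul] at key₀ key₁
  rw [key₀, key₁, hzeta]
  exact ⟨rfl, rfl⟩

theorem stmt_16 (p : ℕ) [Fact p.Prime] (v : ℕ) (s : ℝ) (hs : 3 < s) :
    ((1 - (p : ℝ)⁻¹)⁻¹) ^ 2 *
        ∫ t in {q : ℤ_[p] × ℤ_[p] | ‖q.1‖ = ‖q.2‖},
          ‖t.1‖ ^ (s - 2) * ‖t.2‖ ^ (s - 2) ∂((μ p).prod (μ p)) =
      zetap p (2 * s - 2) ∧
    ((1 - (p : ℝ)⁻¹)⁻¹) ^ 2 *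
        ∫ t in {q : ℤ_[p] × ℤ_[p] | ‖q.1‖ = p * ‖q.2‖},
          ‖t.1‖ ^ (s - 2) * ‖t.2‖ ^ (s - 2) ∂((μ p).prod (μ p)) =
      (p : ℝ) ^ (1 - s) * zetap p (2 * s - 2) :=
  stmt_16_general p s hs
end

section
/- For every prime p and real s > 3, ζ_p(s−2)·(ζ_p(s)ζ_p(s−1) − p^{2−s} ζ_p(2s−2)ζ_p(2s−3)) = ζ_p(s)ζ_p(s−1)ζ_p(2s−2)ζ_p(2s−3)/ζ_p(3s−3). -/
lemma aux_18 (q t : ℝ) (h1 : 1 - t ≠ 0) (h2 : 1 - q * t ≠ 0) (h3 : 1 - q ^ 2 * t ≠ 0)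
    (h4 : 1 - q ^ 2 * t ^ 2 ≠ 0) (h5 : 1 - q ^ 3 * t ^ 2 ≠ 0) (h6 : 1 - q ^ 3 * t ^ 3 ≠ 0) :
    (1 - q ^ 2 * t)⁻¹ * ((1 - t)⁻¹ * (1 - q * t)⁻¹ -
        q ^ 2 * t * (1 - q ^ 2 * t ^ 2)⁻¹ * (1 - q ^ 3 * t ^ 2)⁻¹) =
      (1 - t)⁻¹ * (1 - q * t)⁻¹ * (1 - q ^ 2 * t ^ 2)⁻¹ * (1 - q ^ 3 * t ^ 2)⁻¹ /
        (1 - q ^ 3 * t ^ 3)⁻¹ := by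
  field_simp
  ring

theorem stmt_18 (p : ℕ) (hp : p.Prime) (s : ℝ) (hs : 3 < s) :
    zetap p (s - 2) * (zetap p s * zetap p (s - 1) -
        (p : ℝ) ^ (2 - s) * zetap p (2 * s - 2) * zetap p (2 * s - 3)) =
      zetap p s * zetap p (s - 1) * zetap p (2 * s - 2) * zetap p (2 * s - 3) /
        zetap p (3 * s - 3) := by
  have hp1 : (1 : ℝ) < (p : ℝ) := by exact_mod_cast hp.one_lt
  have hp0 : (0 : ℝ) < (p : ℝ) := lt_trans one_pos hp1
  have key : ∀ a : ℝ, (p : ℝ) ^ (a - s) = (p : ℝ) ^ a * (p : ℝ) ^ (-s) := fun a => by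
    rw [sub_eq_add_neg, Real.rpow_add hp0]
  have pw : ∀ n : ℕ, (p : ℝ) ^ ((n : ℝ)) = (p : ℝ) ^ n := fun n => Real.rpow_natCast _ n
  have e1 : (p : ℝ) ^ (-(s - 1)) = (p : ℝ) ^ 1 * (p : ℝ) ^ (-s) := by
    rw [neg_sub, ← pw 1]; exact_mod_cast key 1
  have e2 : (p : ℝ) ^ (-(s - 2)) = (p : ℝ) ^ 2 * (p : ℝ) ^ (-s) := by
    rw [neg_sub, ← pw 2]; exact_mod_cast key 2
  have e3 : (p : ℝ) ^ (-(2 * s - 2)) = (p : ℝ) ^ 2 * ((p : ℝ) ^ (-s)) ^ 2 := by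
    rw [neg_sub, show (2 : ℝ) - 2 * s = ((2:ℕ):ℝ) + (-s + -s) by push_cast; ring,
      Real.rpow_add hp0, Real.rpow_add hp0, pw]; ring
  have e4 : (p : ℝ) ^ (-(2 * s - 3)) = (p : ℝ) ^ 3 * ((p : ℝ) ^ (-s)) ^ 2 := by
    rw [neg_sub, show (3 : ℝ) - 2 * s = ((3:ℕ):ℝ) + (-s + -s) by push_cast; ring,
      Real.rpow_add hp0, Real.rpow_add hp0, pw]; ring
  have e5 : (p : ℝ) ^ (-(3 * s - 3)) = (p : ℝ) ^ 3 * ((p : ℝ) ^ (-s)) ^ 3 := by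
    rw [neg_sub, show (3 : ℝ) - 3 * s = ((3:ℕ):ℝ) + (-s + (-s + -s)) by push_cast; ring,
      Real.rpow_add hp0, Real.rpow_add hp0, Real.rpow_add hp0, pw]; ring
  have e6 : (p : ℝ) ^ (2 - s) = (p : ℝ) ^ 2 * (p : ℝ) ^ (-s) := by
    rw [← pw 2]; exact_mod_cast key 2
  have hlt : ∀ u : ℝ, 0 < u → (p : ℝ) ^ (-u) < 1 := fun u hu => by
    rw [Real.rpow_neg hp0.le, inv_lt_one_iff₀]
    right
    exact Real.one_lt_rpow_iff_of_pos hp0 |>.mpr (Or.inl ⟨hp1, hu⟩)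
  have h1 : 1 - (p : ℝ) ^ (-s) ≠ 0 := by have := hlt s (by linarith); linarith
  have h2 : 1 - (p : ℝ) ^ (-(s - 1)) ≠ 0 := by have := hlt (s-1) (by linarith); linarith
  have h3 : 1 - (p : ℝ) ^ (-(s - 2)) ≠ 0 := by have := hlt (s-2) (by linarith); linarith
  have h4 : 1 - (p : ℝ) ^ (-(2 * s - 2)) ≠ 0 := by have := hlt (2*s-2) (by linarith); linarith
  have h5 : 1 - (p : ℝ) ^ (-(2 * s - 3)) ≠ 0 := by have := hlt (2*s-3) (by linarith); linarith
  have h6 : 1 - (p : ℝ) ^ (-(3 * s - 3)) ≠ 0 := by have := hlt (3*s-3) (by linarith); linarith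
  rw [e1] at h2; rw [e2] at h3; rw [e3] at h4; rw [e4] at h5; rw [e5] at h6
  simp only [zetap]
  rw [e1, e2, e3, e4, e5, e6]
  have := aux_18 (p : ℝ) ((p : ℝ) ^ (-s)) h1 (by rwa [pow_one] at h2) h3 h4 h5 h6
  rw [pow_one]
  exact this
end

section
/- Define Z_v(p,t) = (1/(1−p²t)) · (1/((1−t)(1−pt)) − (p²t)^{v+1}/((1−p²t²)(1−p³t²))) with t = p^{−s}, the local subgroup zeta function of N_k at p, where v = v_p(k). Then for v = 0, Z_0(p^{−1}, t^{−1}) = −p³ t³ · Z_0(p, t). -/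
/-- Local subgroup zeta function of `N_k` at `p`, with `v = v_p(k)` and `t = p^{-s}`,
as a rational function in `p` and `t`. -/
noncomputable def Zv (v : ℕ) (p t : ℝ) : ℝ :=
  (1 - p ^ 2 * t)⁻¹ *
    ((1 - t)⁻¹ * (1 - p * t)⁻¹ -
      (p ^ 2 * t) ^ (v + 1) * (1 - p ^ 2 * t ^ 2)⁻¹ * (1 - p ^ 3 * t ^ 2)⁻¹)

theorem stmt_19 (p t : ℝ) (hp : p ≠ 0) (ht : t ≠ 0)
    (h1 : 1 - t ≠ 0) (h2 : 1 - p * t ≠ 0) (h3 : 1 - p ^ 2 * t ≠ 0)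
    (h4 : 1 - p ^ 2 * t ^ 2 ≠ 0) (h5 : 1 - p ^ 3 * t ^ 2 ≠ 0) :
    Zv 0 p⁻¹ t⁻¹ = -(p ^ 3 * t ^ 3) * Zv 0 p t := by
  have g1 : t - 1 ≠ 0 := fun h => h1 (by linarith [sub_eq_zero.mp h])
  have g2 : p * t - 1 ≠ 0 := fun h => h2 (by linarith [sub_eq_zero.mp h])
  have g3 : p ^ 2 * t - 1 ≠ 0 := fun h => h3 (by linarith [sub_eq_zero.mp h])
  have g4 : p ^ 2 * t ^ 2 - 1 ≠ 0 := fun h => h4 (by linarith [sub_eq_zero.mp h])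
  have g5 : p ^ 3 * t ^ 2 - 1 ≠ 0 := fun h => h5 (by linarith [sub_eq_zero.mp h])
  have e1 : (1 : ℝ) - t⁻¹ = (t - 1) / t := by field_simp
  have e2 : (1 : ℝ) - p⁻¹ * t⁻¹ = (p * t - 1) / (p * t) := by field_simp
  have e3 : (1 : ℝ) - (p⁻¹) ^ 2 * t⁻¹ = (p ^ 2 * t - 1) / (p ^ 2 * t) := by field_simp
  have e4 : (1 : ℝ) - (p⁻¹) ^ 2 * (t⁻¹) ^ 2 = (p ^ 2 * t ^ 2 - 1) / (p ^ 2 * t ^ 2) := by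
    field_simp
  have e5 : (1 : ℝ) - (p⁻¹) ^ 3 * (t⁻¹) ^ 2 = (p ^ 3 * t ^ 2 - 1) / (p ^ 3 * t ^ 2) := by
    field_simp
  simp only [Zv, zero_add, pow_one, e1, e2, e3, e4, e5, inv_div]
  field_simp
  ring
end
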